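/- Let a ≥ 0 be a real number and α, γ, δ real numbers with α > -1, δ > -1, γ + δ + a + 1 > -1, and let β be a nonnegative integer. Then ∫_0^1 ∫_0^{t₁} (1-t₁)^α (1-t₂)^β t₁^γ t₂^δ (t₁-t₂)^a dt₂ dt₁ = Σ_{j=0}^β ((-β)_j / j!) · B(α+1, j+γ+δ+a+2) · B(a+1, j+δ+1). -/

import Mathlib

/-!
Expanding `(1 - t₂) ^ β = ∑ⱼ (-β)ⱼ / j! · t₂ ^ j` turns the inner integral into a finite sum of
scaled Beta integrals `∫₀ᵗ s ^ p (t - s) ^ q ds = t ^ (p + q + 1) B(p + 1, q + 1)`, and each term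
of that sum is again a Beta integral in `t₁`.
-/

/-- Pochhammer symbol `(x)_k` on the reals. -/
noncomputable def poch (x : ℝ) (k : ℕ) : ℝ := (ascPochhammer ℝ k).eval x

/-- Euler Beta function `B(p,q) = Γ(p)Γ(q)/Γ(p+q)`. -/
noncomputable def betaFn (p q : ℝ) : ℝ := Real.Gamma p * Real.Gamma q / Real.Gamma (p + q)

open MeasureTheory Set Finset

lemma betaFn_comm (p q : ℝ) : betaFn p q = betaFn q p := by
  rw [betaFn, betaFn, add_comm, mul_comm]

lemma betaFn_pos {p q : ℝ} (hp : 0 < p) (hq : 0 < q) : 0 < betaFn p q :=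
  ProbabilityTheory.beta_pos hp hq

lemma integral_Ioo_rpow_mul_sub_rpow {p q c : ℝ} (hp : -1 < p) (hq : -1 < q) (hc : 0 < c) :
    ∫ x in Ioo 0 c, x ^ p * (c - x) ^ q = c ^ (p + q + 1) * betaFn (p + 1) (q + 1) := by
  rw [← integral_Ioc_eq_integral_Ioo, ← intervalIntegral.integral_of_le hc.le]
  apply Complex.ofReal_injective
  have hp' : 0 < ((p + 1 : ℝ) : ℂ).re := by simp; linarith
  have hq' : 0 < ((q + 1 : ℝ) : ℂ).re := by simp; linarith
  have hscaled := Complex.betaIntegral_scaled ((p + 1 : ℝ) : ℂ) ((q + 1 : ℝ) : ℂ) hc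
  rw [Complex.betaIntegral_eq_Gamma_mul_div _ _ hp' hq', ← Complex.ofReal_add] at hscaled
  simp only [Complex.Gamma_ofReal] at hscaled
  rw [← intervalIntegral.integral_ofReal]
  convert hscaled using 1
  · refine intervalIntegral.integral_congr fun x hx => ?_
    rw [uIcc_of_le hc.le] at hx
    simp only [Complex.ofReal_add, Complex.ofReal_one, add_sub_cancel_right]
    push_cast [Complex.ofReal_cpow hx.1, Complex.ofReal_cpow (sub_nonneg.2 hx.2)]
    rfl
  · push_cast [betaFn, Complex.ofReal_cpow hc.le]
    ring_nf

lemma integrableOn_Ioo_rpow_mul_sub_rpow {p q c : ℝ} (hp : -1 < p) (hq : -1 < q) (hc : 0 < c) :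
    IntegrableOn (fun x => x ^ p * (c - x) ^ q) (Ioo 0 c) :=
  -- a non-integrable function has Bochner integral `0`, but this one integrates to a positive value
  Integrable.of_integral_ne_zero <| by
    rw [integral_Ioo_rpow_mul_sub_rpow hp hq hc]
    exact (mul_pos (Real.rpow_pos_of_pos hc _) (betaFn_pos (by linarith) (by linarith))).ne'

lemma integral_eq_sum_mul_integral {X ι 𝕜 : Type*} [MeasurableSpace X] [RCLike 𝕜] {μ : Measure X}
    {F : X → 𝕜} (s : Finset ι) (c : ι → 𝕜) {f : ι → X → 𝕜}
    (hf : ∀ i ∈ s, Integrable (f i) μ) (hF : ∀ᵐ x ∂μ, F x = ∑ i ∈ s, c i * f i x) :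
    ∫ x, F x ∂μ = ∑ i ∈ s, c i * ∫ x, f i x ∂μ := by
  rw [integral_congr_ae hF, integral_finsetSum _ fun i hi => (hf i hi).const_mul _]
  simp_rw [integral_const_mul]

lemma poch_neg_natCast_div_factorial (n j : ℕ) :
    poch (-n) j / j.factorial = (-1) ^ j * n.choose j := by
  rw [poch, ascPochhammer_eval_neg_eq_descPochhammer, descPochhammer_eval_eq_descFactorial,
    Nat.descFactorial_eq_factorial_mul_choose]
  push_cast
  field_simp

lemma one_sub_pow_eq_sum_poch (n : ℕ) (x : ℝ) :
    (1 - x) ^ n = ∑ j ∈ range (n + 1), poch (-n) j / j.factorial * x ^ j := by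
  rw [sub_eq_neg_add, add_pow]
  refine sum_congr rfl fun j _ => ?_
  rw [poch_neg_natCast_div_factorial, neg_pow]
  ring

lemma integral_Ioo_one_sub_pow_mul_rpow_mul_sub_rpow (n : ℕ) {p q c : ℝ} (hp : -1 < p)
    (hq : -1 < q) (hc : 0 < c) :
    ∫ x in Ioo 0 c, (1 - x) ^ n * x ^ p * (c - x) ^ q =
      ∑ j ∈ range (n + 1),
        poch (-n) j / j.factorial * (c ^ (p + j + q + 1) * betaFn (p + j + 1) (q + 1)) := by
  have hpj : ∀ j : ℕ, -1 < p + j := fun j => by linarith [j.cast_nonneg (α := ℝ)]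
  rw [integral_eq_sum_mul_integral (range (n + 1)) (fun j => poch (-n) j / j.factorial)
    (fun j _ => integrableOn_Ioo_rpow_mul_sub_rpow (hpj j) hq hc)]
  · simp_rw [integral_Ioo_rpow_mul_sub_rpow (hpj _) hq hc]
  · refine ae_restrict_of_forall_mem measurableSet_Ioo fun x hx => ?_
    rw [one_sub_pow_eq_sum_poch, sum_mul, sum_mul]
    refine sum_congr rfl fun j _ => ?_
    rw [Real.rpow_add hx.1, Real.rpow_natCast]
    ring

theorem stmt5 (a : ℝ) (ha : 0 ≤ a) (α γ δ : ℝ) (hα : -1 < α) (hδ : -1 < δ)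
    (hγδ : -1 < γ + δ + a + 1) (β : ℕ) :
    (∫ t1 in Set.Ioo (0 : ℝ) 1, ∫ t2 in Set.Ioo (0 : ℝ) t1,
        (1 - t1) ^ α * (1 - t2) ^ (β : ℕ) * t1 ^ γ * t2 ^ δ * (t1 - t2) ^ a) =
      ∑ j ∈ Finset.range (β + 1),
        poch (-(β : ℝ)) j / j.factorial *
          betaFn (α + 1) ((j : ℝ) + γ + δ + a + 2) * betaFn (a + 1) ((j : ℝ) + δ + 1) := by
  have hexp : ∀ j : ℕ, -1 < γ + δ + j + a + 1 := fun j => by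
    linarith [j.cast_nonneg (α := ℝ)]
  rw [integral_eq_sum_mul_integral (range (β + 1))
    (fun j => poch (-β) j / j.factorial * betaFn (a + 1) (j + δ + 1))
    (fun j _ => integrableOn_Ioo_rpow_mul_sub_rpow (hexp j) hα one_pos)]
  · refine sum_congr rfl fun j _ => ?_
    rw [integral_Ioo_rpow_mul_sub_rpow (hexp j) hα one_pos, Real.one_rpow, one_mul,
      betaFn_comm (α + 1)]
    ring_nf
  · refine ae_restrict_of_forall_mem measurableSet_Ioo fun t ht => ?_
    calc
      _ = (1 - t) ^ α * t ^ γ * ∫ s in Ioo 0 t, (1 - s) ^ β * s ^ δ * (t - s) ^ a := by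
        rw [← integral_const_mul]
        congr 1 with s
        ring
      _ = _ := by
        rw [integral_Ioo_one_sub_pow_mul_rpow_mul_sub_rpow β hδ (by linarith) ht.1, mul_sum]
        refine sum_congr rfl fun j _ => ?_
        rw [betaFn_comm (a + 1), show γ + δ + j + a + 1 = γ + (δ + j + a + 1) by ring,
          Real.rpow_add ht.1 γ]
        ring_nf
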